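/- A word w over the nonnegative integers is pop stack sortable if and only if w avoids the patterns 120, 201, and 1010. -/

import Mathlib

/-!
The algorithm cuts the word into maximal weakly decreasing runs and outputs each run reversed,
so the output is sorted iff the first run `x :: r` is dominated by every later letter and the rest
of the word sorts. The pattern condition peels off the same way. If a later letter `c` is
below `x`, then `x`, `c`, and the ascent `u < y` ending the run form a `120`, `201` or `1010`.
Conversely, when all later letters are at least `x`, no occurrence of a pattern can meet the run,
whose letters only decrease and lie below everything after it.
-/

def Contains120 (w : List ℕ) : Prop :=
  ∃ i j k, i < j ∧ j < k ∧ k < w.length ∧ w.getD k 0 < w.getD i 0 ∧ w.getD i 0 < w.getD j 0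

def Contains201 (w : List ℕ) : Prop :=
  ∃ i j k, i < j ∧ j < k ∧ k < w.length ∧ w.getD j 0 < w.getD k 0 ∧ w.getD k 0 < w.getD i 0

def Contains210 (w : List ℕ) : Prop :=
  ∃ i j k, i < j ∧ j < k ∧ k < w.length ∧ w.getD k 0 < w.getD j 0 ∧ w.getD j 0 < w.getD i 0

def Contains1010 (w : List ℕ) : Prop :=
  ∃ i j k l, i < j ∧ j < k ∧ k < l ∧ l < w.length ∧
    w.getD j 0 = w.getD l 0 ∧ w.getD l 0 < w.getD i 0 ∧ w.getD i 0 = w.getD k 0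

/-- The greedy pop stack sorting algorithm: push the next input letter whenever the pop
stack is empty or the letter is at most the top; otherwise pop the entire stack to the
output; at the end pop all remaining entries. -/
def popStackSortAux : List ℕ → List ℕ → List ℕ → List ℕ
  | [], st, out => out ++ st
  | x :: xs, [], out => popStackSortAux xs [x] out
  | x :: xs, t :: st, out =>
    if x ≤ t then popStackSortAux xs (x :: t :: st) out
    else popStackSortAux xs [x] (out ++ t :: st)
termination_by input _ _ => input.length

def popStackSort (w : List ℕ) : List ℕ := popStackSortAux w [] []

open scoped List

theorem popStackSortAux_append_output (xs st out out' : List ℕ) :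
    popStackSortAux xs st (out ++ out') = out ++ popStackSortAux xs st out' := by
  fun_induction popStackSortAux xs st out' <;> simp_all [popStackSortAux]

theorem popStackSortAux_perm (xs st out : List ℕ) :
    (popStackSortAux xs st out).Perm (out ++ st ++ xs) := by
  fun_induction popStackSortAux xs st out with
  | case1 => simp
  | case2 x xs out ih => simpa using ih
  | case3 x xs t st out h ih =>
    exact ih.trans (by simpa using (List.perm_middle (l₁ := t :: st)).symm.append_left out)
  | case4 x xs t st out h ih => simpa using ih

theorem popStackSort_perm (w : List ℕ) : (popStackSort w).Perm w := by
  simpa [popStackSort] using popStackSortAux_perm w [] []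

theorem popStackSortAux_append_of_pairwise {t : ℕ} {l : List ℕ} (rest st out : List ℕ)
    (hrun : (t :: l).Pairwise (· ≥ ·))
    (hlast : ∀ y ∈ rest.head?, (t :: l).getLast (List.cons_ne_nil t l) < y) :
    popStackSortAux (l ++ rest) (t :: st) out =
      popStackSortAux rest [] (out ++ l.reverse ++ t :: st) := by
  induction l generalizing t st with
  | nil =>
    cases rest with
    | nil => simp [popStackSortAux]
    | cons y ys =>
      have hty : ¬ y ≤ t := by simpa using hlast y rfl
      simp [popStackSortAux, hty]
  | cons a l ih =>
    have hat : a ≤ t := List.rel_of_pairwise_cons hrun List.mem_cons_self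
    rw [List.cons_append, popStackSortAux, if_pos hat,
      ih (t :: st) (List.pairwise_cons.1 hrun).2 (by simpa using hlast)]
    simp

theorem popStackSort_cons_append_of_pairwise {x : ℕ} {r rest : List ℕ}
    (hrun : (x :: r).Pairwise (· ≥ ·))
    (hlast : ∀ y ∈ rest.head?, (x :: r).getLast (List.cons_ne_nil x r) < y) :
    popStackSort (x :: (r ++ rest)) = (x :: r).reverse ++ popStackSort rest := by
  rw [popStackSort, popStackSortAux, popStackSortAux_append_of_pairwise rest [] [] hrun hlast,
    popStackSort, ← popStackSortAux_append_output]
  simp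

theorem exists_eq_append_pairwise_ge_getLast_lt (x : ℕ) (xs : List ℕ) :
    ∃ r rest, xs = r ++ rest ∧ (x :: r).Pairwise (· ≥ ·) ∧
      ∀ y ∈ rest.head?, (x :: r).getLast (List.cons_ne_nil x r) < y := by
  induction xs generalizing x with
  | nil => exact ⟨[], [], rfl, by simp, by simp⟩
  | cons y ys ih =>
    by_cases hyx : y ≤ x
    · obtain ⟨r, rest, rfl, hr, hlast⟩ := ih y
      refine ⟨y :: r, rest, rfl, List.pairwise_cons.2 ⟨fun z hz => ?_, hr⟩,
        by simpa using hlast⟩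
      rcases List.mem_cons.1 hz with rfl | hz
      exacts [hyx, (List.rel_of_pairwise_cons hr hz).trans hyx]
    · exact ⟨[], y :: ys, rfl, by simp, by simpa using hyx⟩

theorem List.pairwise_reverse_append_iff {α : Type*} [LE α] {p s : List α}
    (hp : p.Pairwise (· ≥ ·)) :
    (p.reverse ++ s).Pairwise (· ≤ ·) ↔
      (∀ a ∈ p, ∀ c ∈ s, a ≤ c) ∧ s.Pairwise (· ≤ ·) := by
  simp [List.pairwise_append, List.pairwise_reverse, hp, and_comm]

theorem exists_getD_three_iff_exists_sublist {w : List ℕ} {P : ℕ → ℕ → ℕ → Prop} :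
    (∃ i j k, i < j ∧ j < k ∧ k < w.length ∧ P (w.getD i 0) (w.getD j 0) (w.getD k 0)) ↔
      ∃ a b c, [a, b, c] <+ w ∧ P a b c := by
  constructor
  · rintro ⟨i, j, k, hij, hjk, hk, hP⟩
    rw [List.getD_eq_getElem _ _ (by omega), List.getD_eq_getElem _ _ (by omega),
      List.getD_eq_getElem _ _ hk] at hP
    refine ⟨_, _, _, ?_, hP⟩
    simpa using List.map_getElem_sublist (l := w)
      (is := [⟨i, by omega⟩, ⟨j, by omega⟩, ⟨k, hk⟩]) (by simp; omega)
  · rintro ⟨a, b, c, hs, hP⟩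
    obtain ⟨is, his, hlt⟩ := List.sublist_eq_map_getElem hs
    rcases is with _ | ⟨i, _ | ⟨j, _ | ⟨k, _ | _⟩⟩⟩ <;>
      simp only [List.map_cons, List.map_nil, List.cons.injEq, reduceCtorEq,
        and_false] at his
    obtain ⟨rfl, rfl, rfl, -⟩ := his
    simp only [List.pairwise_cons, List.mem_cons, List.not_mem_nil, or_false, forall_eq_or_imp,
      forall_eq, ← Fin.val_fin_lt] at hlt
    exact ⟨i, j, k, by omega, by omega, k.2, by simpa [List.getD_eq_getElem] using hP⟩

theorem exists_getD_four_iff_exists_sublist {w : List ℕ} {P : ℕ → ℕ → ℕ → ℕ → Prop} :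
    (∃ i j k l, i < j ∧ j < k ∧ k < l ∧ l < w.length ∧
        P (w.getD i 0) (w.getD j 0) (w.getD k 0) (w.getD l 0)) ↔
      ∃ a b c d, [a, b, c, d] <+ w ∧ P a b c d := by
  constructor
  · rintro ⟨i, j, k, l, hij, hjk, hkl, hl, hP⟩
    rw [List.getD_eq_getElem _ _ (by omega), List.getD_eq_getElem _ _ (by omega),
      List.getD_eq_getElem _ _ (by omega), List.getD_eq_getElem _ _ hl] at hP
    refine ⟨_, _, _, _, ?_, hP⟩
    simpa using List.map_getElem_sublist (l := w)
      (is := [⟨i, by omega⟩, ⟨j, by omega⟩, ⟨k, by omega⟩, ⟨l, hl⟩])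
      (by simp; omega)
  · rintro ⟨a, b, c, d, hs, hP⟩
    obtain ⟨is, his, hlt⟩ := List.sublist_eq_map_getElem hs
    rcases is with _ | ⟨i, _ | ⟨j, _ | ⟨k, _ | ⟨l, _ | _⟩⟩⟩⟩ <;>
      simp only [List.map_cons, List.map_nil, List.cons.injEq, reduceCtorEq,
        and_false] at his
    obtain ⟨rfl, rfl, rfl, rfl, -⟩ := his
    simp only [List.pairwise_cons, List.mem_cons, List.not_mem_nil, or_false, forall_eq_or_imp,
      forall_eq, ← Fin.val_fin_lt] at hlt
    exact ⟨i, j, k, l, by omega, by omega, by omega, l.2,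
      by simpa [List.getD_eq_getElem] using hP⟩

theorem contains120_iff_exists_sublist {w : List ℕ} :
    Contains120 w ↔ ∃ a b c, [a, b, c] <+ w ∧ c < a ∧ a < b :=
  exists_getD_three_iff_exists_sublist (P := fun a b c => c < a ∧ a < b)

theorem contains201_iff_exists_sublist {w : List ℕ} :
    Contains201 w ↔ ∃ a b c, [a, b, c] <+ w ∧ b < c ∧ c < a :=
  exists_getD_three_iff_exists_sublist (P := fun a b c => b < c ∧ c < a)

theorem contains1010_iff_exists_sublist {w : List ℕ} :
    Contains1010 w ↔ ∃ a b, [a, b, a, b] <+ w ∧ b < a := by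
  refine (exists_getD_four_iff_exists_sublist
    (P := fun a b c d => b = d ∧ d < a ∧ a = c)).trans ?_
  constructor
  · rintro ⟨a, b, _, _, hs, rfl, hba, rfl⟩
    exact ⟨a, b, hs, hba⟩
  · rintro ⟨a, b, hs, hba⟩
    exact ⟨a, b, a, b, hs, rfl, hba, rfl⟩

theorem Contains120.mono {v w : List ℕ} (h : Contains120 v) (hvw : v <+ w) : Contains120 w := by
  obtain ⟨a, b, c, hs, h⟩ := contains120_iff_exists_sublist.1 h
  exact contains120_iff_exists_sublist.2 ⟨a, b, c, hs.trans hvw, h⟩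

theorem Contains201.mono {v w : List ℕ} (h : Contains201 v) (hvw : v <+ w) : Contains201 w := by
  obtain ⟨a, b, c, hs, h⟩ := contains201_iff_exists_sublist.1 h
  exact contains201_iff_exists_sublist.2 ⟨a, b, c, hs.trans hvw, h⟩

theorem Contains1010.mono {v w : List ℕ} (h : Contains1010 v) (hvw : v <+ w) :
    Contains1010 w := by
  obtain ⟨a, b, hs, h⟩ := contains1010_iff_exists_sublist.1 h
  exact contains1010_iff_exists_sublist.2 ⟨a, b, hs.trans hvw, h⟩

theorem exists_eq_append_of_sublist_append {p q s : List ℕ} (hp : p.Pairwise (· ≥ ·))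
    (hpq : ∀ a ∈ p, ∀ c ∈ q, a ≤ c) (hs : s <+ p ++ q) :
    ∃ s₁ s₂, s = s₁ ++ s₂ ∧ s₁.Pairwise (· ≥ ·) ∧ s₂ <+ q ∧
      ∀ a ∈ s₁, ∀ c ∈ s₂, a ≤ c := by
  obtain ⟨s₁, s₂, rfl, h₁, h₂⟩ := List.sublist_append_iff.1 hs
  exact ⟨s₁, s₂, rfl, hp.sublist h₁, h₂,
    fun a ha c hc => hpq a (h₁.subset ha) c (h₂.subset hc)⟩

theorem Contains120.of_append {p q : List ℕ} (hp : p.Pairwise (· ≥ ·))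
    (hpq : ∀ a ∈ p, ∀ c ∈ q, a ≤ c) (h : Contains120 (p ++ q)) : Contains120 q := by
  obtain ⟨a, b, c, hs, hca, hab⟩ := contains120_iff_exists_sublist.1 h
  obtain ⟨s₁, s₂, heq, hs₁, hs₂, hcross⟩ := exists_eq_append_of_sublist_append hp hpq hs
  rcases s₁ with _ | ⟨a', _ | ⟨b', _ | ⟨c', _ | _⟩⟩⟩ <;>
      simp only [List.cons_append, List.nil_append, List.cons.injEq, List.nil_eq, reduceCtorEq,
        and_false] at heq
  · exact contains120_iff_exists_sublist.2 ⟨a, b, c, heq ▸ hs₂, hca, hab⟩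
  all_goals casesm* _ ∧ _; subst_vars; simp_all; omega

theorem Contains201.of_append {p q : List ℕ} (hp : p.Pairwise (· ≥ ·))
    (hpq : ∀ a ∈ p, ∀ c ∈ q, a ≤ c) (h : Contains201 (p ++ q)) : Contains201 q := by
  obtain ⟨a, b, c, hs, hbc, hca⟩ := contains201_iff_exists_sublist.1 h
  obtain ⟨s₁, s₂, heq, hs₁, hs₂, hcross⟩ := exists_eq_append_of_sublist_append hp hpq hs
  rcases s₁ with _ | ⟨a', _ | ⟨b', _ | ⟨c', _ | _⟩⟩⟩ <;>
      simp only [List.cons_append, List.nil_append, List.cons.injEq, List.nil_eq, reduceCtorEq,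
        and_false] at heq
  · exact contains201_iff_exists_sublist.2 ⟨a, b, c, heq ▸ hs₂, hbc, hca⟩
  all_goals casesm* _ ∧ _; subst_vars; simp_all; omega

theorem Contains1010.of_append {p q : List ℕ} (hp : p.Pairwise (· ≥ ·))
    (hpq : ∀ a ∈ p, ∀ c ∈ q, a ≤ c) (h : Contains1010 (p ++ q)) : Contains1010 q := by
  obtain ⟨a, b, hs, hba⟩ := contains1010_iff_exists_sublist.1 h
  obtain ⟨s₁, s₂, heq, hs₁, hs₂, hcross⟩ := exists_eq_append_of_sublist_append hp hpq hs
  rcases s₁ with _ | ⟨a', _ | ⟨b', _ | ⟨c', _ | ⟨d', _ | _⟩⟩⟩⟩ <;>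
      simp only [List.cons_append, List.nil_append, List.cons.injEq, List.nil_eq, reduceCtorEq,
        and_false] at heq
  · exact contains1010_iff_exists_sublist.2 ⟨a, b, heq ▸ hs₂, hba⟩
  all_goals casesm* _ ∧ _; subst_vars; simp_all; omega

open List in
theorem head_le_of_not_contains {x u y : ℕ} {r ys : List ℕ} (hu : u ∈ x :: r) (huy : u < y)
    (h120 : ¬ Contains120 (x :: (r ++ y :: ys))) (h201 : ¬ Contains201 (x :: (r ++ y :: ys)))
    (h1010 : ¬ Contains1010 (x :: (r ++ y :: ys))) : ∀ c ∈ y :: ys, x ≤ c := by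
  intro c hc
  by_contra! hcx
  have hsub {s t : List ℕ} (hs : s <+ x :: r) (ht : t <+ y :: ys) :
      s ++ t <+ x :: (r ++ y :: ys) :=
    hs.append ht
  have hur (hux : u ≠ x) : [x, u] <+ x :: r :=
    cons_sublist_cons.2 (singleton_sublist.2 ((mem_cons.1 hu).resolve_left hux))
  have hcys (hcy : c ≠ y) : [y, c] <+ y :: ys :=
    cons_sublist_cons.2 (singleton_sublist.2 ((mem_cons.1 hc).resolve_left hcy))
  rcases lt_trichotomy y x with hyx | rfl | hxy
  · exact h201 (contains201_iff_exists_sublist.2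
      ⟨x, u, y, hsub (hur (by omega)) (singleton_sublist.2 mem_cons_self), huy, hyx⟩)
  · rcases lt_trichotomy u c with huc | rfl | hcu
    · exact h201 (contains201_iff_exists_sublist.2
        ⟨y, u, c, hsub (hur (by omega)) (singleton_sublist.2 hc), huc, hcx⟩)
    · exact h1010 (contains1010_iff_exists_sublist.2
        ⟨y, u, hsub (hur (by omega)) (hcys (by omega)), huy⟩)
    · exact h120 (contains120_iff_exists_sublist.2
        ⟨u, y, c, hsub (singleton_sublist.2 hu) (hcys (by omega)), hcu, huy⟩)
  · exact h120 (contains120_iff_exists_sublist.2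
      ⟨x, y, c, hsub (singleton_sublist.2 mem_cons_self) (hcys (by omega)), hcx, hxy⟩)

theorem not_contains_cons_append_iff {x : ℕ} {r rest : List ℕ}
    (hrun : (x :: r).Pairwise (· ≥ ·))
    (hlast : ∀ y ∈ rest.head?, (x :: r).getLast (List.cons_ne_nil x r) < y) :
    (¬ Contains120 (x :: (r ++ rest)) ∧ ¬ Contains201 (x :: (r ++ rest)) ∧
        ¬ Contains1010 (x :: (r ++ rest))) ↔
      (∀ a ∈ x :: r, ∀ c ∈ rest, a ≤ c) ∧
        ¬ Contains120 rest ∧ ¬ Contains201 rest ∧ ¬ Contains1010 rest := by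
  constructor
  · rintro ⟨h120, h201, h1010⟩
    have hsub : rest <+ x :: (r ++ rest) := List.sublist_append_right (x :: r) rest
    refine ⟨fun a ha c hc => ?_, fun h => h120 (h.mono hsub), fun h => h201 (h.mono hsub),
      fun h => h1010 (h.mono hsub)⟩
    obtain _ | ⟨y, ys⟩ := rest
    · simp at hc
    have hax : a ≤ x := by
      rcases List.mem_cons.1 ha with rfl | ha
      exacts [le_rfl, List.rel_of_pairwise_cons hrun ha]
    exact hax.trans
      (head_le_of_not_contains (List.getLast_mem _) (hlast y rfl) h120 h201 h1010 c hc)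
  · rintro ⟨hcross, h120, h201, h1010⟩
    exact ⟨fun h => h120 (Contains120.of_append (p := x :: r) hrun hcross h),
      fun h => h201 (Contains201.of_append (p := x :: r) hrun hcross h),
      fun h => h1010 (Contains1010.of_append (p := x :: r) hrun hcross h)⟩

/-- A word is pop stack sortable iff it avoids the patterns 120, 201 and 1010. -/
theorem pop_stack_sortable_iff (w : List ℕ) :
    List.Pairwise (· ≤ ·) (popStackSort w) ↔
      ¬ Contains120 w ∧ ¬ Contains201 w ∧ ¬ Contains1010 w := by
  induction w using (measure List.length).wf.induction with
  | h w ih =>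
    rcases w with _ | ⟨x, xs⟩
    · simp [popStackSort, popStackSortAux, Contains120, Contains201, Contains1010]
    obtain ⟨r, rest, rfl, hrun, hlast⟩ := exists_eq_append_pairwise_ge_getLast_lt x xs
    have hshorter : rest.length < (x :: (r ++ rest)).length := by simp
    rw [popStackSort_cons_append_of_pairwise hrun hlast, List.pairwise_reverse_append_iff hrun,
      not_contains_cons_append_iff hrun hlast, ih rest hshorter]
    simp only [(popStackSort_perm rest).mem_iff]
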